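/- For every finite set Q, the map safra2slice sends every ranked Safra tree over Q to a ranked slice over Q, the map slice2safra sends every ranked slice over Q with at least one set to a ranked Safra tree over Q, and these two maps are mutually inverse; hence they constitute a bijection between the set of ranked Safra trees over Q and the set of ranked slices over Q with at least one set. -/

import Mathlib

universe u

/-- A finite ordered rooted tree, each node carrying a label (a subset of `Q`) and a
rank (a natural number); the children lists give the sibling order. -/
inductive OTree (Q : Type u) : Type u where
  | node : Set Q → ℕ → List (OTree Q) → OTree Q

namespace OTree

variable {Q : Type u}

/-- Label of the root node. -/
def rootLabel : OTree Q → Set Q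
  | node S _ _ => S

/-- Rank of the root node. -/
def rootRank : OTree Q → ℕ
  | node _ r _ => r

mutual
  /-- Depth-first post-order listing of the (label, rank) pairs of all nodes. -/
  def postorder : OTree Q → List (Set Q × ℕ)
    | .node S r cs => postorderL cs ++ [(S, r)]
  def postorderL : List (OTree Q) → List (Set Q × ℕ)
    | [] => []
    | t :: ts => postorder t ++ postorderL ts
end

/-- The labels of all nodes, in post-order. -/
def labels (t : OTree Q) : List (Set Q) := (postorder t).map Prod.fst

/-- The ranks of all nodes, in post-order. -/
def ranks (t : OTree Q) : List ℕ := (postorder t).map Prod.snd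

/-- Number of nodes. -/
def size (t : OTree Q) : ℕ := (postorder t).length

mutual
  /-- Each parent has a smaller rank than each of its children, and the ranks of the
  children of any node strictly increase from left to right. -/
  def RanksOK : OTree Q → Prop
    | .node _ r cs =>
        (cs.map rootRank).Pairwise (· < ·) ∧ (∀ c ∈ cs, r < rootRank c) ∧ RanksOKL cs
  def RanksOKL : List (OTree Q) → Prop
    | [] => True
    | t :: ts => RanksOK t ∧ RanksOKL ts
end

/-- A valid ranked Safra tree: nonempty pairwise disjoint labels, the ranks form a
bijection onto `{1,…,n}`, a parent's rank is smaller than its children's ranks and the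
sibling order agrees with the rank order. -/
def IsRankedSafraTree (t : OTree Q) : Prop :=
  (∀ S ∈ labels t, S.Nonempty) ∧ (labels t).Pairwise Disjoint ∧
  (ranks t).Perm (List.range' 1 (size t)) ∧ RanksOK t

end OTree

/-- A ranked slice over `Q`, in list form: a tuple of pairwise disjoint nonempty
subsets of `Q` together with the list of its ranks, which is a permutation of
`[1,…,n]` whose last entry is `1`. -/
def IsRankedSliceL {Q : Type u} (p : List (Set Q) × List ℕ) : Prop :=
  (∀ T ∈ p.1, T.Nonempty) ∧ p.1.Pairwise Disjoint ∧
  p.2.Perm (List.range' 1 p.1.length) ∧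
  (1 ≤ p.1.length → p.2.getLast? = some 1)

namespace OTree

variable {Q : Type u}

/-- `safra2slice`: list the labels and ranks of the tree in depth-first post-order. -/
def safra2slice (t : OTree Q) : List (Set Q) × List ℕ := (labels t, ranks t)

/-- One step of the stack-based construction of the rank tree of a ranked slice:
all trees on the stack whose root rank exceeds `r` become (in reverse popping order)
the children of a new node labelled `S` with rank `r`. -/
def push (acc : List (OTree Q)) (S : Set Q) (r : ℕ) : List (OTree Q) :=
  OTree.node S r ((acc.takeWhile (fun t => decide (r < rootRank t))).reverse) ::
    acc.dropWhile (fun t => decide (r < rootRank t))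

/-- The stack obtained by processing a list of (label, rank) pairs left to right. -/
def buildStack (l : List (Set Q × ℕ)) : List (OTree Q) :=
  l.foldl (fun acc p => push acc p.1 p.2) []

/-- `slice2safra`: the rank tree of a ranked slice (the parent of an index is the
closest index to the right with smaller rank; siblings are ordered by index), with
node `i` labelled by the `i`-th set and ranked by the `i`-th rank. -/
def slice2safra (p : List (Set Q) × List ℕ) : OTree Q :=
  (buildStack (p.1.zip p.2)).headD (OTree.node ∅ 1 [])

end OTree

/-!
`slice2safra` is the stack algorithm that rebuilds a tree from its post-order listing: reading
a node of rank `r` pops the stacked subtrees of rank larger than `r` and makes them its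
children. Its invariant is that the stack holds well-ranked trees whose root ranks decrease
towards the bottom and whose post-orders, read bottom to top, make up the input read so far.
For a ranked slice the last rank `1` lies below all others, so the whole input collapses into a
single ranked Safra tree with the given post-order. Conversely, in a ranked Safra tree every
node has smaller rank than its descendants and siblings are sorted by rank, so running the
algorithm on its post-order rebuilds exactly that tree; as the ranks are `1, …, n`, the last
one, that of the root, is `1`.
-/

theorem List.eq_false_of_mem_dropWhile {α : Type*} {p : α → Bool} {l : List α}
    (hl : l.Pairwise fun a b => p b → p a) {x : α} (hx : x ∈ l.dropWhile p) : p x = false := by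
  induction l with
  | nil => simp at hx
  | cons a l ih =>
    rw [List.pairwise_cons] at hl
    by_cases ha : p a
    · rw [List.dropWhile_cons_of_pos ha] at hx
      exact ih hl.2 hx
    · rw [List.dropWhile_cons_of_neg ha, List.mem_cons] at hx
      rcases hx with rfl | hx
      · simpa using ha
      · simpa using mt (hl.1 x hx) ha

namespace OTree

variable {Q : Type u}

theorem ranksOKL_iff (cs : List (OTree Q)) : RanksOKL cs ↔ ∀ c ∈ cs, RanksOK c := by
  induction cs with
  | nil => simp [RanksOKL]
  | cons t ts ih => simp [RanksOKL, ih]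

theorem postorderL_append (l₁ l₂ : List (OTree Q)) :
    postorderL (l₁ ++ l₂) = postorderL l₁ ++ postorderL l₂ := by
  induction l₁ with
  | nil => simp [postorderL]
  | cons t ts ih => simp [postorderL, ih]

theorem mem_postorderL {x : Set Q × ℕ} {cs : List (OTree Q)} :
    x ∈ postorderL cs ↔ ∃ c ∈ cs, x ∈ postorder c := by
  induction cs with
  | nil => simp [postorderL]
  | cons t ts ih => simp [postorderL, ih]

theorem root_mem_postorder (t : OTree Q) : (rootLabel t, rootRank t) ∈ postorder t := by
  cases t
  simp [postorder, rootLabel, rootRank]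

theorem labels_ne_nil (t : OTree Q) : labels t ≠ [] := by
  cases t
  simp [labels, postorder]

theorem size_eq_length_labels (t : OTree Q) : size t = (labels t).length :=
  (List.length_map _).symm

theorem ranks_getLast? (t : OTree Q) : (ranks t).getLast? = some (rootRank t) := by
  cases t
  simp [ranks, postorder, rootRank]

theorem rootRank_le_of_mem_postorder :
    ∀ (t : OTree Q), RanksOK t → ∀ x ∈ postorder t, rootRank t ≤ x.2
  | .node S r cs, hok, x, hx => by
    rw [RanksOK] at hok
    rw [postorder, List.mem_append, List.mem_singleton] at hx
    rcases hx with hx | rfl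
    · obtain ⟨c, hc, hxc⟩ := mem_postorderL.1 hx
      have hroot := hok.2.1 c hc
      have hc_le := rootRank_le_of_mem_postorder c ((ranksOKL_iff cs).1 hok.2.2 c hc) x hxc
      exact hroot.le.trans hc_le
    · exact le_rfl
termination_by t => sizeOf t
decreasing_by
  have := List.sizeOf_lt_of_mem hc
  simp_wf
  omega

/-- The root carries the least rank, and the ranks are exactly `1, …, n`. -/
theorem rootRank_eq_one {t : OTree Q} (hok : RanksOK t)
    (hperm : (ranks t).Perm (List.range' 1 (size t))) : rootRank t = 1 := by
  have hpos : 0 < size t := size_eq_length_labels t ▸ List.length_pos_iff.2 (labels_ne_nil t)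
  obtain ⟨x, hx, hx1⟩ := List.mem_map.1 (hperm.mem_iff.2 (List.mem_range'_1.2 ⟨le_rfl, by omega⟩))
  have hroot := List.mem_range'_1.1 <|
    hperm.mem_iff.1 (List.mem_map_of_mem (f := Prod.snd) (root_mem_postorder t))
  have := rootRank_le_of_mem_postorder t hok x hx
  omega

theorem safra2slice_eq_unzip (t : OTree Q) : safra2slice t = (postorder t).unzip := by
  rw [List.unzip_eq_map]
  rfl

theorem isRankedSafraTree_iff (t : OTree Q) :
    IsRankedSafraTree t ↔ IsRankedSliceL (safra2slice t) ∧ RanksOK t := by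
  constructor
  · rintro ⟨hne, hdisj, hperm, hok⟩
    refine ⟨⟨hne, hdisj, size_eq_length_labels t ▸ hperm, fun _ => ?_⟩, hok⟩
    rw [safra2slice, ranks_getLast?, rootRank_eq_one hok hperm]
  · rintro ⟨⟨hne, hdisj, hperm, -⟩, hok⟩
    exact ⟨hne, hdisj, size_eq_length_labels t ▸ hperm, hok⟩

mutual

theorem foldl_push_postorder : ∀ (t : OTree Q) (acc : List (OTree Q)), RanksOK t →
    (∀ s ∈ acc, rootRank s < rootRank t) →
    (postorder t).foldl (fun a x => push a x.1 x.2) acc = t :: acc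
  | .node S r cs, acc, hok, hacc => by
    rw [RanksOK] at hok
    replace hacc : ∀ s ∈ acc, rootRank s < r := hacc
    rw [postorder, List.foldl_append, foldl_push_postorderL cs acc hok.2.2 hok.1
      fun s hs c hc => (hacc s hs).trans (hok.2.1 c hc)]
    simp only [List.foldl_cons, List.foldl_nil, push]
    rw [List.takeWhile_append_of_pos (by simpa using hok.2.1),
      List.dropWhile_append_of_pos (by simpa using hok.2.1),
      List.takeWhile_eq_nil_iff.2 (fun h => by simpa using (hacc _ (List.getElem_mem h)).le),
      List.dropWhile_eq_self_iff.2 (by simpa using fun h => (hacc _ (List.getElem_mem h)).le),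
      List.append_nil, List.reverse_reverse]

theorem foldl_push_postorderL : ∀ (cs : List (OTree Q)) (acc : List (OTree Q)), RanksOKL cs →
    (cs.map rootRank).Pairwise (· < ·) →
    (∀ s ∈ acc, ∀ c ∈ cs, rootRank s < rootRank c) →
    (postorderL cs).foldl (fun a x => push a x.1 x.2) acc = cs.reverse ++ acc
  | [], acc, _, _, _ => by simp [postorderL]
  | t :: ts, acc, hok, hsorted, hacc => by
    rw [RanksOKL] at hok
    rw [List.map_cons, List.pairwise_cons] at hsorted
    rw [postorderL, List.foldl_append, foldl_push_postorder t acc hok.1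
      fun s hs => hacc s hs t List.mem_cons_self]
    rw [foldl_push_postorderL ts (t :: acc) hok.2 hsorted.2]
    · simp
    · intro s hs c hc
      rcases List.mem_cons.1 hs with rfl | hs
      · exact hsorted.1 _ (List.mem_map_of_mem hc)
      · exact hacc s hs c (List.mem_cons_of_mem t hc)

end

theorem slice2safra_safra2slice {t : OTree Q} (hok : RanksOK t) :
    slice2safra (safra2slice t) = t := by
  rw [slice2safra, safra2slice_eq_unzip, List.zip_unzip, buildStack,
    foldl_push_postorder t [] hok (by simp)]
  rfl

/-- The invariant of the stack in `buildStack`, whose top is the head of the list. -/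
def IsRankedStack (acc : List (OTree Q)) : Prop :=
  (∀ t ∈ acc, RanksOK t) ∧ (acc.map rootRank).Pairwise (· > ·)

theorem ranksOK_node_reverse {cs : List (OTree Q)} (hcs : IsRankedStack cs) (S : Set Q) {r : ℕ}
    (hr : ∀ c ∈ cs, r < rootRank c) : RanksOK (node S r cs.reverse) := by
  rw [RanksOK, List.map_reverse, List.pairwise_reverse, ranksOKL_iff]
  simp only [List.mem_reverse]
  exact ⟨hcs.2, hr, hcs.1⟩

theorem push_eq_singleton {acc : List (OTree Q)} (S : Set Q) {r : ℕ}
    (hr : ∀ s ∈ acc, r < rootRank s) : push acc S r = [node S r acc.reverse] := by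
  rw [push, List.takeWhile_eq_self_iff.2 (by simpa using hr),
    List.dropWhile_eq_nil_iff.2 (by simpa using hr)]

theorem isRankedStack_push {acc : List (OTree Q)} (hacc : IsRankedStack acc) (S : Set Q) {r : ℕ}
    (hr : r ∉ acc.map rootRank) : IsRankedStack (push acc S r) := by
  set tk := acc.takeWhile fun t => decide (r < rootRank t)
  set dp := acc.dropWhile fun t => decide (r < rootRank t)
  have hsplit : tk ++ dp = acc := List.takeWhile_append_dropWhile
  have hsorted := hacc.2
  rw [← hsplit, List.map_append, List.pairwise_append] at hsorted
  have hmem_tk : ∀ t ∈ tk, t ∈ acc := fun t ht => hsplit ▸ List.mem_append_left dp ht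
  have hmem_dp : ∀ t ∈ dp, t ∈ acc := fun t ht => hsplit ▸ List.mem_append_right tk ht
  -- the root ranks decrease down the stack, so those left after popping are `≤ r`, hence `< r`
  have hdp : ∀ t ∈ dp, rootRank t < r := by
    intro t ht
    have hle : ¬ r < rootRank t := by
      simpa using List.eq_false_of_mem_dropWhile ((List.pairwise_map.1 hacc.2).imp
        fun hab hb => decide_eq_true ((of_decide_eq_true hb).trans hab)) ht
    have hne : rootRank t ≠ r := fun h => hr (h ▸ List.mem_map_of_mem (hmem_dp t ht))
    omega
  refine ⟨?_, ?_⟩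
  · simp only [push, List.mem_cons, forall_eq_or_imp]
    refine ⟨ranksOK_node_reverse ⟨fun t ht => hacc.1 t (hmem_tk t ht), hsorted.1⟩ S ?_,
      fun t ht => hacc.1 t (hmem_dp t ht)⟩
    intro c hc
    simpa using List.mem_takeWhile_imp hc
  · rw [push, List.map_cons, List.pairwise_cons]
    refine ⟨fun a ha => ?_, hsorted.2.1⟩
    obtain ⟨t, ht, rfl⟩ := List.mem_map.1 ha
    exact hdp t ht

theorem postorderL_reverse_push (acc : List (OTree Q)) (S : Set Q) (r : ℕ) :
    postorderL (push acc S r).reverse = postorderL acc.reverse ++ [(S, r)] := by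
  rw [push]
  conv_rhs => rw [← List.takeWhile_append_dropWhile (p := fun t => decide (r < rootRank t)) (l := acc)]
  simp only [List.reverse_cons, List.reverse_append, postorderL_append, postorderL, postorder,
    List.append_assoc, List.append_nil]

theorem buildStack_concat (l : List (Set Q × ℕ)) (S : Set Q) (r : ℕ) :
    buildStack (l ++ [(S, r)]) = push (buildStack l) S r := by
  rw [buildStack, List.foldl_append]
  rfl

theorem postorderL_reverse_buildStack (l : List (Set Q × ℕ)) :
    postorderL (buildStack l).reverse = l := by
  induction l using List.reverseRecOn with
  | nil => rfl
  | append_singleton l x ih =>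
    rw [buildStack_concat, postorderL_reverse_push, ih]

theorem rootRank_mem_of_mem_buildStack {l : List (Set Q × ℕ)} {t : OTree Q}
    (ht : t ∈ buildStack l) : rootRank t ∈ l.map Prod.snd := by
  have hroot : (rootLabel t, rootRank t) ∈ l := by
    rw [← postorderL_reverse_buildStack l, mem_postorderL]
    exact ⟨t, List.mem_reverse.2 ht, root_mem_postorder t⟩
  exact List.mem_map_of_mem hroot

theorem isRankedStack_buildStack {l : List (Set Q × ℕ)} (hl : (l.map Prod.snd).Nodup) :
    IsRankedStack (buildStack l) := by
  induction l using List.reverseRecOn with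
  | nil => simp [IsRankedStack, buildStack]
  | append_singleton l x ih =>
    rw [List.map_append, List.nodup_append] at hl
    rw [buildStack_concat]
    refine isRankedStack_push (ih hl.1) x.1 fun hx => ?_
    obtain ⟨t, ht, hrt⟩ := List.mem_map.1 hx
    exact hl.2.2 _ (rootRank_mem_of_mem_buildStack ht) _ (List.mem_singleton_self _) hrt

theorem exists_buildStack_concat_eq_singleton {l : List (Set Q × ℕ)}
    (hl : (l.map Prod.snd).Nodup) (S : Set Q) {r : ℕ} (hr : ∀ x ∈ l, r < x.2) :
    ∃ t, buildStack (l ++ [(S, r)]) = [t] ∧ RanksOK t ∧ postorder t = l ++ [(S, r)] := by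
  have hroots : ∀ s ∈ buildStack l, r < rootRank s := fun s hs => by
    obtain ⟨x, hx, hxs⟩ := List.mem_map.1 (rootRank_mem_of_mem_buildStack hs)
    exact hxs ▸ hr x hx
  refine ⟨_, by rw [buildStack_concat, push_eq_singleton S hroots],
    ranksOK_node_reverse (isRankedStack_buildStack hl) S hroots, ?_⟩
  rw [postorder, postorderL_reverse_buildStack]

theorem ranksOK_slice2safra_and_safra2slice_slice2safra {p : List (Set Q) × List ℕ}
    (hp : IsRankedSliceL p) (hne : p.1 ≠ []) :
    RanksOK (slice2safra p) ∧ safra2slice (slice2safra p) = p := by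
  obtain ⟨-, -, hperm, hlast⟩ := hp
  have hlen : p.1.length = p.2.length := by rw [hperm.length_eq, List.length_range']
  have hunzip : (p.1.zip p.2).unzip = p := List.unzip_zip hlen
  have hsnd : (p.1.zip p.2).map Prod.snd = p.2 := List.map_snd_zip hlen.ge
  have hnd : ((p.1.zip p.2).map Prod.snd).Nodup := by
    rw [hsnd]
    exact hperm.nodup_iff.2 List.nodup_range'
  have hpos : ∀ y ∈ p.1.zip p.2, 1 ≤ y.2 := fun y hy => by
    have hy2 : y.2 ∈ p.2 := hsnd ▸ List.mem_map_of_mem hy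
    exact (List.mem_range'_1.1 (hperm.mem_iff.1 hy2)).1
  rw [slice2safra]
  generalize p.1.zip p.2 = l at hunzip hsnd hnd hpos
  obtain ⟨l', ⟨S, r⟩, rfl⟩ : ∃ l' x, l = l' ++ [x] := by
    rcases List.eq_nil_or_concat l with rfl | ⟨l', x, rfl⟩
    · exact absurd (by simpa using congrArg Prod.fst hunzip.symm) hne
    · exact ⟨l', x, List.concat_eq_append⟩
  have hr : r = 1 := by
    simpa [← hsnd] using hlast (List.length_pos_iff.2 hne)
  subst hr
  rw [List.map_append, List.nodup_append] at hnd
  have hgt : ∀ y ∈ l', 1 < y.2 := fun y hy => by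
    have hne1 := hnd.2.2 _ (List.mem_map_of_mem hy) 1 (List.mem_singleton_self _)
    have := hpos y (List.mem_append_left _ hy)
    omega
  obtain ⟨t, hbuild, hok, hpost⟩ := exists_buildStack_concat_eq_singleton hnd.1 S hgt
  rw [hbuild]
  refine ⟨hok, ?_⟩
  rw [List.headD_cons, safra2slice_eq_unzip, hpost, hunzip]

end OTree

open OTree in
/-- `safra2slice` maps ranked Safra trees over `Q` to nonempty ranked
slices over `Q`, `slice2safra` maps nonempty ranked slices over `Q` to ranked Safra
trees over `Q`, and the two maps are mutually inverse; hence they form a bijection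
between ranked Safra trees over `Q` and ranked slices over `Q` with at least one set. -/
theorem safra2slice_slice2safra_bijection (Q : Type u) :
    (∀ t : OTree Q, IsRankedSafraTree t →
      IsRankedSliceL (safra2slice t) ∧ (safra2slice t).1 ≠ [] ∧
        slice2safra (safra2slice t) = t) ∧
    (∀ p : List (Set Q) × List ℕ, IsRankedSliceL p → p.1 ≠ [] →
      IsRankedSafraTree (slice2safra p) ∧ safra2slice (slice2safra p) = p) := by
  constructor
  · intro t ht
    obtain ⟨hslice, hok⟩ := (isRankedSafraTree_iff t).1 ht
    exact ⟨hslice, labels_ne_nil t, slice2safra_safra2slice hok⟩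
  · intro p hp hne
    obtain ⟨hok, hinv⟩ := ranksOK_slice2safra_and_safra2slice_slice2safra hp hne
    exact ⟨(isRankedSafraTree_iff _).2 ⟨by rw [hinv]; exact hp, hok⟩, hinv⟩
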